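/- arXiv:1608.07723 — 3 statements merged into one kernel-verified Lean document; each statement's English description precedes it below -/
import Mathlib

section
/- Let G be the complement of a mantled L(K_{3,3}) on n vertices. Then cc(G) ≤ n−1. -/
open SimpleGraph

/-- A finite collection of cliques of `G` covering every edge of `G`. -/
def IsEdgeCliqueCover {V : Type*} (G : SimpleGraph V) (𝒞 : Finset (Set V)) : Prop :=
  (∀ C ∈ 𝒞, G.IsClique C) ∧ ∀ ⦃u v : V⦄, G.Adj u v → ∃ C ∈ 𝒞, u ∈ C ∧ v ∈ C

/-- The (edge) clique cover number of `G`: the least size of an edge clique covering. -/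
noncomputable def edgeCliqueCoverNumber {V : Type*} (G : SimpleGraph V) : ℕ :=
  sInf {k | ∃ 𝒞 : Finset (Set V), IsEdgeCliqueCover G 𝒞 ∧ 𝒞.card = k}

/-- A triad: three pairwise distinct, pairwise nonadjacent vertices. -/
def IsTriad {V : Type*} (G : SimpleGraph V) (x y z : V) : Prop :=
  x ≠ y ∧ x ≠ z ∧ y ≠ z ∧ ¬ G.Adj x y ∧ ¬ G.Adj x z ∧ ¬ G.Adj y z

/-- `G` is the complement of a mantled `L(K_{3,3})`: the vertex set is the disjoint union of
`W = {a_j^i : 1 ≤ i,j ≤ 3}` (here `a i j = a_j^i`), `V^1, V^2, V^3` (`Vup`) and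
`V_1, V_2, V_3` (`Vlow`), where `a_j^i ~ a_{j'}^{i'}` iff `i = i'` or `j = j'`; each `Vup i`
and `Vlow i` is a clique; `Vup i` is anticomplete to `{a_1^i, a_2^i, a_3^i}` and complete to
the rest of `W`; `Vlow j` is anticomplete to `{a_j^1, a_j^2, a_j^3}` and complete to the rest
of `W`; `Vup 1 ∪ Vup 2 ∪ Vup 3` is complete to `Vlow 1 ∪ Vlow 2 ∪ Vlow 3`; and no triad is
contained in `Vup 1 ∪ Vup 2 ∪ Vup 3` or in `Vlow 1 ∪ Vlow 2 ∪ Vlow 3`. -/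
structure IsMantledLK33Complement {V : Type*} (G : SimpleGraph V)
    (a : Fin 3 → Fin 3 → V) (Vup Vlow : Fin 3 → Set V) : Prop where
  a_inj : ∀ i j i' j' : Fin 3, a i j = a i' j' → i = i' ∧ j = j'
  a_notmem_up : ∀ i j l : Fin 3, a i j ∉ Vup l
  a_notmem_low : ∀ i j l : Fin 3, a i j ∉ Vlow l
  up_disj : ∀ l l' : Fin 3, l ≠ l' → Disjoint (Vup l) (Vup l')
  low_disj : ∀ l l' : Fin 3, l ≠ l' → Disjoint (Vlow l) (Vlow l')
  up_low_disj : ∀ l l' : Fin 3, Disjoint (Vup l) (Vlow l')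
  cover : (⋃ i : Fin 3, ⋃ j : Fin 3, {a i j}) ∪ (⋃ l : Fin 3, Vup l) ∪
    (⋃ l : Fin 3, Vlow l) = Set.univ
  a_adj : ∀ i j i' j' : Fin 3, i ≠ i' ∨ j ≠ j' →
    (G.Adj (a i j) (a i' j') ↔ (i = i' ∨ j = j'))
  up_clique : ∀ l : Fin 3, G.IsClique (Vup l)
  low_clique : ∀ l : Fin 3, G.IsClique (Vlow l)
  up_anti : ∀ l : Fin 3, ∀ v ∈ Vup l, ∀ j : Fin 3, ¬ G.Adj v (a l j)
  up_compl : ∀ l : Fin 3, ∀ v ∈ Vup l, ∀ i j : Fin 3, i ≠ l → G.Adj v (a i j)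
  low_anti : ∀ l : Fin 3, ∀ v ∈ Vlow l, ∀ i : Fin 3, ¬ G.Adj v (a i l)
  low_compl : ∀ l : Fin 3, ∀ v ∈ Vlow l, ∀ i j : Fin 3, j ≠ l → G.Adj v (a i j)
  up_low_compl : ∀ l l' : Fin 3, ∀ u ∈ Vup l, ∀ w ∈ Vlow l', G.Adj u w
  up_no_triad : ∀ x ∈ ⋃ l : Fin 3, Vup l, ∀ y ∈ ⋃ l : Fin 3, Vup l,
    ∀ z ∈ ⋃ l : Fin 3, Vup l, ¬ IsTriad G x y z
  low_no_triad : ∀ x ∈ ⋃ l : Fin 3, Vlow l, ∀ y ∈ ⋃ l : Fin 3, Vlow l,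
    ∀ z ∈ ⋃ l : Fin 3, Vlow l, ¬ IsTriad G x y z

namespace MLK33

lemma fa11 : ∀ i : Fin 3, i + 1 + 1 = i + 2 := by decide
lemma fa21 : ∀ i : Fin 3, i + 2 + 1 = i := by decide
lemma fa12 : ∀ i : Fin 3, i + 1 + 2 = i := by decide
lemma fa22 : ∀ i : Fin 3, i + 2 + 2 = i + 1 := by decide
lemma fn1 : ∀ i : Fin 3, i + 1 ≠ i := by decide
lemma fn2 : ∀ i : Fin 3, i + 2 ≠ i := by decide
lemma fn3 : ∀ i : Fin 3, i + 1 ≠ i + 2 := by decide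
lemma fn4 : ∀ i : Fin 3, i + 2 ≠ i + 1 := by decide
lemma fin3_cases : ∀ k i : Fin 3, k ≠ i → k = i + 1 ∨ k = i + 2 := by decide
lemma fin3_all : ∀ k i : Fin 3, k = i ∨ k = i + 1 ∨ k = i + 2 := by decide
lemma fin3_third : ∀ l l' : Fin 3, l ≠ l' → ∃ p, l ≠ p ∧ l' ≠ p := by decide
lemma fin3_two : ∀ m m' i : Fin 3, m ≠ i → m' ≠ i → m ≠ m' →
    (m = i + 1 ∧ m' = i + 2) ∨ (m = i + 2 ∧ m' = i + 1) := by decide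

variable {V : Type*} {G : SimpleGraph V} {a : Fin 3 → Fin 3 → V} {Vup Vlow : Fin 3 → Set V}

section Helpers
variable (h : IsMantledLK33Complement G a Vup Vlow)
include h

lemma adj_row {i j j' : Fin 3} (hne : j ≠ j') : G.Adj (a i j) (a i j') :=
  (h.a_adj i j i j' (Or.inr hne)).mpr (Or.inl rfl)

lemma adj_col {i i' j : Fin 3} (hne : i ≠ i') : G.Adj (a i j) (a i' j) :=
  (h.a_adj i j i' j (Or.inl hne)).mpr (Or.inr rfl)

lemma adj_WW_cases {i j i' j' : Fin 3} (hadj : G.Adj (a i j) (a i' j')) :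
    i = i' ∨ j = j' := by
  by_cases hi : i = i'
  · exact Or.inl hi
  · exact (h.a_adj i j i' j' (Or.inl hi)).mp hadj

lemma classify (x : V) :
    (∃ i j, x = a i j) ∨ (∃ m, x ∈ Vup m) ∨ (∃ p, x ∈ Vlow p) := by
  have hx : x ∈ ((⋃ i : Fin 3, ⋃ j : Fin 3, {a i j}) ∪ (⋃ l : Fin 3, Vup l) ∪
      (⋃ l : Fin 3, Vlow l)) := h.cover ▸ Set.mem_univ x
  rcases hx with (hx | hx) | hx
  · left
    simp only [Set.mem_iUnion, Set.mem_singleton_iff] at hx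
    obtain ⟨i, j, hij⟩ := hx
    exact ⟨i, j, hij⟩
  · right; left; simpa only [Set.mem_iUnion] using hx
  · right; right; simpa only [Set.mem_iUnion] using hx

end Helpers

end MLK33
namespace MLK33

variable {V : Type*} (G : SimpleGraph V) (a : Fin 3 → Fin 3 → V) (Vup Vlow : Fin 3 → Set V)

/-- Row clique: `Vup m` together with row `m+1`. -/
def FR (m : Fin 3) : Set V := {x | x ∈ Vup m ∨ ∃ l, x = a (m + 1) l}

/-- Column clique: `Vlow p` together with column `p+1`. -/
def FC (p : Fin 3) : Set V := {x | x ∈ Vlow p ∨ ∃ k, x = a k (p + 1)}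

/-- Per-vertex clique for `u ∈ Vup m` (case A). -/
def TA (m : Fin 3) (u : V) : Set V :=
  {x | x = u ∨ (G.Adj u x ∧ x ∈ Vup (m + 1)) ∨ (∃ l, l ≠ m ∧ x = a (m + 2) l) ∨
    x ∈ Vlow m}

/-- Per-vertex clique for `w ∈ Vlow p` (case A). -/
def SA (p : Fin 3) (w : V) : Set V :=
  {x | x = w ∨ (G.Adj w x ∧ x ∈ Vlow (p + 1)) ∨ (∃ k, k ≠ p + 2 ∧ x = a k (p + 2)) ∨
    x ∈ Vup (p + 2)}

/-- Vertices of `Vup m` with no neighbour in `Vup (m+2)`. -/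
def ZAU (m : Fin 3) : Set V := {x | x ∈ Vup m ∧ ∀ y ∈ Vup (m + 2), ¬ G.Adj x y}

/-- Vertices of `Vlow (m+2)` with no neighbour in `Vlow (m+1)`. -/
def ZAD (m : Fin 3) : Set V := {x | x ∈ Vlow (m + 2) ∧ ∀ y ∈ Vlow (m + 1), ¬ G.Adj x y}

/-- The spare clique (case A). -/
def ZA (m : Fin 3) : Set V := ZAU G Vup m ∪ ZAD G Vlow m

variable {G a Vup Vlow}

section Cliques
variable (h : IsMantledLK33Complement G a Vup Vlow)
include h

lemma isClique_FR (m : Fin 3) : G.IsClique (FR a Vup m) := by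
  intro x hx y hy hne
  simp only [FR, Set.mem_setOf_eq] at hx hy
  obtain hx | ⟨l, rfl⟩ := hx <;> obtain hy | ⟨l', rfl⟩ := hy
  · exact h.up_clique m hx hy hne
  · exact h.up_compl m x hx _ _ (fn1 m)
  · exact (h.up_compl m y hy _ _ (fn1 m)).symm
  · have hll : l ≠ l' := fun e => hne (by rw [e])
    exact adj_row h hll

lemma isClique_FC (p : Fin 3) : G.IsClique (FC a Vlow p) := by
  intro x hx y hy hne
  simp only [FC, Set.mem_setOf_eq] at hx hy
  obtain hx | ⟨k, rfl⟩ := hx <;> obtain hy | ⟨k', rfl⟩ := hy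
  · exact h.low_clique p hx hy hne
  · exact h.low_compl p x hx _ _ (fn1 p)
  · exact (h.low_compl p y hy _ _ (fn1 p)).symm
  · have hkk : k ≠ k' := fun e => hne (by rw [e])
    exact adj_col h hkk

lemma isClique_TA {m : Fin 3} {u : V} (hu : u ∈ Vup m) :
    G.IsClique (TA G a Vup Vlow m u) := by
  intro x hx y hy hne
  simp only [TA, Set.mem_setOf_eq] at hx hy
  obtain rfl | ⟨hadj, hxU⟩ | ⟨l, hl, rfl⟩ | hxD := hx <;>
    obtain rfl | ⟨hadj', hyU⟩ | ⟨l', hl', rfl⟩ | hyD := hy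
  · exact absurd rfl hne
  · exact hadj'
  · exact h.up_compl m x hu _ _ (fn2 m)
  · exact h.up_low_compl m m x hu y hyD
  · exact hadj.symm
  · exact h.up_clique (m + 1) hxU hyU hne
  · exact h.up_compl (m + 1) x hxU _ _ (fn4 m)
  · exact h.up_low_compl (m + 1) m x hxU y hyD
  · exact (h.up_compl m y hu _ _ (fn2 m)).symm
  · exact (h.up_compl (m + 1) y hyU _ _ (fn4 m)).symm
  · have hll : l ≠ l' := fun e => hne (by rw [e])
    exact adj_row h hll
  · exact (h.low_compl m y hyD _ _ hl).symm
  · exact (h.up_low_compl m m y hu x hxD).symm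
  · exact (h.up_low_compl (m + 1) m y hyU x hxD).symm
  · exact h.low_compl m x hxD _ _ hl'
  · exact h.low_clique m hxD hyD hne

lemma isClique_SA {p : Fin 3} {w : V} (hw : w ∈ Vlow p) :
    G.IsClique (SA G a Vup Vlow p w) := by
  intro x hx y hy hne
  simp only [SA, Set.mem_setOf_eq] at hx hy
  obtain rfl | ⟨hadj, hxD⟩ | ⟨k, hk, rfl⟩ | hxU := hx <;>
    obtain rfl | ⟨hadj', hyD⟩ | ⟨k', hk', rfl⟩ | hyU := hy
  · exact absurd rfl hne
  · exact hadj'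
  · exact h.low_compl p x hw _ _ (fn2 p)
  · exact (h.up_low_compl (p + 2) p y hyU x hw).symm
  · exact hadj.symm
  · exact h.low_clique (p + 1) hxD hyD hne
  · exact h.low_compl (p + 1) x hxD _ _ (fn4 p)
  · exact (h.up_low_compl (p + 2) (p + 1) y hyU x hxD).symm
  · exact (h.low_compl p y hw _ _ (fn2 p)).symm
  · exact (h.low_compl (p + 1) y hyD _ _ (fn4 p)).symm
  · have hkk : k ≠ k' := fun e => hne (by rw [e])
    exact adj_col h hkk
  · exact (h.up_compl (p + 2) y hyU _ _ hk).symm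
  · exact h.up_low_compl (p + 2) p x hxU y hw
  · exact h.up_low_compl (p + 2) (p + 1) x hxU y hyD
  · exact h.up_compl (p + 2) x hxU _ _ hk'
  · exact h.up_clique (p + 2) hxU hyU hne

lemma isClique_ZA (m : Fin 3) : G.IsClique (ZA G Vup Vlow m) := by
  intro x hx y hy hne
  obtain ⟨hxU, -⟩ | ⟨hxD, -⟩ := hx <;> obtain ⟨hyU, -⟩ | ⟨hyD, -⟩ := hy
  · exact h.up_clique m hxU hyU hne
  · exact h.up_low_compl m (m + 2) x hxU y hyD
  · exact (h.up_low_compl m (m + 2) y hyU x hxD).symm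
  · exact h.low_clique (m + 2) hxD hyD hne

end Cliques

end MLK33
namespace MLK33

variable {V : Type*} [Fintype V] {G : SimpleGraph V} {a : Fin 3 → Fin 3 → V}
  {Vup Vlow : Fin 3 → Set V}

lemma conclude (h : IsMantledLK33Complement G a Vup Vlow)
    (𝒞 : Finset (Set V)) (hc : IsEdgeCliqueCover G 𝒞) (FU FD : Finset V)
    (hFU : ∀ x ∈ FU, ∃ m, x ∈ Vup m) (hFD : ∀ x ∈ FD, ∃ p, x ∈ Vlow p)
    (hcard : 𝒞.card ≤ 8 + FU.card + FD.card) :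
    edgeCliqueCoverNumber G ≤ Fintype.card V - 1 := by
  classical
  set Wfin : Finset V := Finset.univ.image (fun q : Fin 3 × Fin 3 => a q.1 q.2) with hW
  have hWcard : Wfin.card = 9 := by
    rw [hW, Finset.card_image_of_injective _ ?_, Finset.card_univ]
    · simp
    · intro q q' hqq
      obtain ⟨h1, h2⟩ := h.a_inj _ _ _ _ hqq
      exact Prod.ext h1 h2
  have hWU : Disjoint Wfin FU := by
    rw [Finset.disjoint_left]
    rintro x hxW hxU
    simp only [hW, Finset.mem_image, Finset.mem_univ, true_and] at hxW
    obtain ⟨q, rfl⟩ := hxW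
    obtain ⟨m, hm⟩ := hFU _ hxU
    exact h.a_notmem_up q.1 q.2 m hm
  have hWD : Disjoint Wfin FD := by
    rw [Finset.disjoint_left]
    rintro x hxW hxD
    simp only [hW, Finset.mem_image, Finset.mem_univ, true_and] at hxW
    obtain ⟨q, rfl⟩ := hxW
    obtain ⟨p, hp⟩ := hFD _ hxD
    exact h.a_notmem_low q.1 q.2 p hp
  have hUD : Disjoint FU FD := by
    rw [Finset.disjoint_left]
    intro x hxU hxD
    obtain ⟨m, hm⟩ := hFU _ hxU
    obtain ⟨p, hp⟩ := hFD _ hxD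
    exact Set.disjoint_left.1 (h.up_low_disj m p) hm hp
  have hbig : 9 + FU.card + FD.card ≤ Fintype.card V := by
    have h1 : (Wfin ∪ FU ∪ FD).card = 9 + FU.card + FD.card := by
      rw [Finset.card_union_of_disjoint, Finset.card_union_of_disjoint hWU, hWcard]
      rw [Finset.disjoint_union_left]
      exact ⟨hWD, hUD⟩
    calc 9 + FU.card + FD.card = (Wfin ∪ FU ∪ FD).card := h1.symm
      _ ≤ Finset.univ.card := Finset.card_le_card (Finset.subset_univ _)
      _ = Fintype.card V := Finset.card_univ
  have hle : edgeCliqueCoverNumber G ≤ 𝒞.card := Nat.sInf_le ⟨𝒞, hc, rfl⟩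
  omega

end MLK33
namespace MLK33

variable {V : Type*} [Fintype V] {G : SimpleGraph V} {a : Fin 3 → Fin 3 → V}
  {Vup Vlow : Fin 3 → Set V}

lemma lemA (h : IsMantledLK33Complement G a Vup Vlow)
    (hU : ∀ m, (Vup m).Nonempty) (hD : ∀ p, (Vlow p).Nonempty) :
    edgeCliqueCoverNumber G ≤ Fintype.card V - 1 := by
  classical
  set uF : Fin 3 → Finset V := fun m => (Vup m).toFinite.toFinset with huF
  set dF : Fin 3 → Finset V := fun p => (Vlow p).toFinite.toFinset with hdF
  have huFmem : ∀ m (x : V), x ∈ uF m ↔ x ∈ Vup m := by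
    intro m x; rw [huF]; exact Set.Finite.mem_toFinset _
  have hdFmem : ∀ p (x : V), x ∈ dF p ↔ x ∈ Vlow p := by
    intro p x; rw [hdF]; exact Set.Finite.mem_toFinset _
  set P : Fin 3 → Prop := fun m => (ZAU G Vup m).Nonempty ∧ (ZAD G Vlow m).Nonempty with hP
  set 𝒞 : Finset (Set V) :=
    (Finset.univ.image (FR a Vup)) ∪ (Finset.univ.image (FC a Vlow)) ∪
      ((uF 0).image (TA G a Vup Vlow 0) ∪ (uF 1).image (TA G a Vup Vlow 1) ∪
        (uF 2).image (TA G a Vup Vlow 2)) ∪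
      ((dF 0).image (SA G a Vup Vlow 0) ∪ (dF 1).image (SA G a Vup Vlow 1) ∪
        (dF 2).image (SA G a Vup Vlow 2)) ∪
      ((Finset.univ.filter P).image (ZA G Vup Vlow)) with h𝒞
  -- membership helpers
  have hmemFR : ∀ m, FR a Vup m ∈ 𝒞 := by
    intro m
    rw [h𝒞]
    exact Finset.mem_union_left _ (Finset.mem_union_left _ (Finset.mem_union_left _
      (Finset.mem_union_left _ (Finset.mem_image_of_mem _ (Finset.mem_univ m)))))
  have hmemFC : ∀ p, FC a Vlow p ∈ 𝒞 := by
    intro p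
    rw [h𝒞]
    exact Finset.mem_union_left _ (Finset.mem_union_left _ (Finset.mem_union_left _
      (Finset.mem_union_right _ (Finset.mem_image_of_mem _ (Finset.mem_univ p)))))
  have hmemTA : ∀ m, ∀ u ∈ Vup m, TA G a Vup Vlow m u ∈ 𝒞 := by
    intro m u hu
    rw [h𝒞]
    refine Finset.mem_union_left _ (Finset.mem_union_left _ (Finset.mem_union_right _ ?_))
    fin_cases m
    · exact Finset.mem_union_left _ (Finset.mem_union_left _
        (Finset.mem_image_of_mem _ ((huFmem 0 u).2 hu)))
    · exact Finset.mem_union_left _ (Finset.mem_union_right _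
        (Finset.mem_image_of_mem _ ((huFmem 1 u).2 hu)))
    · exact Finset.mem_union_right _ (Finset.mem_image_of_mem _ ((huFmem 2 u).2 hu))
  have hmemSA : ∀ p, ∀ w ∈ Vlow p, SA G a Vup Vlow p w ∈ 𝒞 := by
    intro p w hw
    rw [h𝒞]
    refine Finset.mem_union_left _ (Finset.mem_union_right _ ?_)
    fin_cases p
    · exact Finset.mem_union_left _ (Finset.mem_union_left _
        (Finset.mem_image_of_mem _ ((hdFmem 0 w).2 hw)))
    · exact Finset.mem_union_left _ (Finset.mem_union_right _
        (Finset.mem_image_of_mem _ ((hdFmem 1 w).2 hw)))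
    · exact Finset.mem_union_right _ (Finset.mem_image_of_mem _ ((hdFmem 2 w).2 hw))
  have hmemZA : ∀ m, P m → ZA G Vup Vlow m ∈ 𝒞 := by
    intro m hPm
    rw [h𝒞]
    exact Finset.mem_union_right _
      (Finset.mem_image_of_mem _ (Finset.mem_filter.2 ⟨Finset.mem_univ m, hPm⟩))
  -- all members are cliques
  have hcl : ∀ C ∈ 𝒞, G.IsClique C := by
    intro C hC
    rw [h𝒞] at hC
    simp only [Finset.mem_union, Finset.mem_image, Finset.mem_univ, true_and,
      Finset.mem_filter] at hC
    rcases hC with ((((⟨m, rfl⟩ | ⟨p, rfl⟩) | hTT) | hSS) | ⟨m, -, rfl⟩)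
    · exact isClique_FR h m
    · exact isClique_FC h p
    · rcases hTT with (⟨u, hu, rfl⟩ | ⟨u, hu, rfl⟩) | ⟨u, hu, rfl⟩
      · exact isClique_TA h ((huFmem 0 u).1 hu)
      · exact isClique_TA h ((huFmem 1 u).1 hu)
      · exact isClique_TA h ((huFmem 2 u).1 hu)
    · rcases hSS with (⟨w, hw, rfl⟩ | ⟨w, hw, rfl⟩) | ⟨w, hw, rfl⟩
      · exact isClique_SA h ((hdFmem 0 w).1 hw)
      · exact isClique_SA h ((hdFmem 1 w).1 hw)
      · exact isClique_SA h ((hdFmem 2 w).1 hw)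
    · exact isClique_ZA h m
  -- coverage
  set Cov : V → V → Prop := fun u v => ∃ C ∈ 𝒞, u ∈ C ∧ v ∈ C with hCov
  have Csymm : ∀ {u v}, Cov u v → Cov v u := by
    rintro u v ⟨C, hC, h1, h2⟩; exact ⟨C, hC, h2, h1⟩
  have hWWc : ∀ i j i' j', G.Adj (a i j) (a i' j') → Cov (a i j) (a i' j') := by
    intro i j i' j' hadj
    rcases adj_WW_cases h hadj with rfl | rfl
    · refine ⟨FR a Vup (i + 2), hmemFR _, Or.inr ⟨j, ?_⟩, Or.inr ⟨j', ?_⟩⟩ <;> rw [fa21]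
    · refine ⟨FC a Vlow (j + 2), hmemFC _, Or.inr ⟨i, ?_⟩, Or.inr ⟨i', ?_⟩⟩ <;> rw [fa21]
  have hWUc : ∀ i j m u, u ∈ Vup m → G.Adj u (a i j) → Cov (a i j) u := by
    intro i j m u hu hadj
    have hi : i ≠ m := fun e => h.up_anti m u hu j (e ▸ hadj)
    rcases fin3_cases i m hi with rfl | rfl
    · exact ⟨FR a Vup m, hmemFR m, Or.inr ⟨j, rfl⟩, Or.inl hu⟩
    · by_cases hj : j = m
      · subst hj
        obtain ⟨w, hw⟩ := hD (j + 1)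
        refine ⟨SA G a Vup Vlow (j + 1) w, hmemSA _ w hw, ?_, ?_⟩
        · refine Or.inr (Or.inr (Or.inl ⟨j + 2, ?_, ?_⟩)) <;> rw [fa12]
          exact fn2 j
        · refine Or.inr (Or.inr (Or.inr ?_))
          rw [fa12]; exact hu
      · exact ⟨TA G a Vup Vlow m u, hmemTA m u hu,
          Or.inr (Or.inr (Or.inl ⟨j, hj, rfl⟩)), Or.inl rfl⟩
  have hWDc : ∀ i j p w, w ∈ Vlow p → G.Adj w (a i j) → Cov (a i j) w := by
    intro i j p w hw hadj
    have hj : j ≠ p := fun e => h.low_anti p w hw i (e ▸ hadj)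
    rcases fin3_cases j p hj with rfl | rfl
    · exact ⟨FC a Vlow p, hmemFC p, Or.inr ⟨i, rfl⟩, Or.inl hw⟩
    · by_cases hi : i = p + 2
      · subst hi
        obtain ⟨u, hu⟩ := hU p
        exact ⟨TA G a Vup Vlow p u, hmemTA p u hu,
          Or.inr (Or.inr (Or.inl ⟨p + 2, fn2 p, rfl⟩)), Or.inr (Or.inr (Or.inr hw))⟩
      · exact ⟨SA G a Vup Vlow p w, hmemSA p w hw,
          Or.inr (Or.inr (Or.inl ⟨i, hi, rfl⟩)), Or.inl rfl⟩
  have hUUc : ∀ m m' u u', u ∈ Vup m → u' ∈ Vup m' → G.Adj u u' → Cov u u' := by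
    intro m m' u u' hu hu' hadj
    by_cases hmm : m' = m
    · subst hmm
      exact ⟨FR a Vup m', hmemFR m', Or.inl hu, Or.inl hu'⟩
    · rcases fin3_cases m' m hmm with rfl | rfl
      · exact ⟨TA G a Vup Vlow m u, hmemTA m u hu, Or.inl rfl,
          Or.inr (Or.inl ⟨hadj, hu'⟩)⟩
      · refine ⟨TA G a Vup Vlow (m + 2) u', hmemTA _ u' hu',
          Or.inr (Or.inl ⟨hadj.symm, ?_⟩), Or.inl rfl⟩
        rw [fa21]; exact hu
  have hDDc : ∀ p p' w w', w ∈ Vlow p → w' ∈ Vlow p' → G.Adj w w' → Cov w w' := by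
    intro p p' w w' hw hw' hadj
    by_cases hpp : p' = p
    · subst hpp
      exact ⟨FC a Vlow p', hmemFC p', Or.inl hw, Or.inl hw'⟩
    · rcases fin3_cases p' p hpp with rfl | rfl
      · exact ⟨SA G a Vup Vlow p w, hmemSA p w hw, Or.inl rfl,
          Or.inr (Or.inl ⟨hadj, hw'⟩)⟩
      · refine ⟨SA G a Vup Vlow (p + 2) w', hmemSA _ w' hw',
          Or.inr (Or.inl ⟨hadj.symm, ?_⟩), Or.inl rfl⟩
        rw [fa21]; exact hw
  have hUDc : ∀ m p u w, u ∈ Vup m → w ∈ Vlow p → Cov u w := by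
    intro m p u w hu hw
    by_cases hpm : p = m
    · subst hpm
      exact ⟨TA G a Vup Vlow p u, hmemTA p u hu, Or.inl rfl,
        Or.inr (Or.inr (Or.inr hw))⟩
    · rcases fin3_cases p m hpm with rfl | rfl
      · refine ⟨SA G a Vup Vlow (m + 1) w, hmemSA _ w hw, ?_, Or.inl rfl⟩
        refine Or.inr (Or.inr (Or.inr ?_))
        rw [fa12]; exact hu
      · by_cases hex : ∃ u' ∈ Vup (m + 2), G.Adj u u'
        · obtain ⟨u', hu', hadj⟩ := hex
          refine ⟨TA G a Vup Vlow (m + 2) u', hmemTA _ u' hu',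
            Or.inr (Or.inl ⟨hadj.symm, ?_⟩), Or.inr (Or.inr (Or.inr hw))⟩
          rw [fa21]; exact hu
        · by_cases hex2 : ∃ w' ∈ Vlow (m + 1), G.Adj w w'
          · obtain ⟨w', hw', hadj⟩ := hex2
            refine ⟨SA G a Vup Vlow (m + 1) w', hmemSA _ w' hw',
              ?_, Or.inr (Or.inl ⟨hadj.symm, ?_⟩)⟩
            · refine Or.inr (Or.inr (Or.inr ?_))
              rw [fa12]; exact hu
            · rw [fa11]; exact hw
          · push_neg at hex hex2
            have huZ : u ∈ ZAU G Vup m := ⟨hu, fun y hy hadj => hex y hy hadj⟩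
            have hwZ : w ∈ ZAD G Vlow m := ⟨hw, fun y hy hadj => hex2 y hy hadj⟩
            exact ⟨ZA G Vup Vlow m, hmemZA m ⟨⟨u, huZ⟩, ⟨w, hwZ⟩⟩,
              Or.inl huZ, Or.inr hwZ⟩
  have hcov : ∀ ⦃u v : V⦄, G.Adj u v → ∃ C ∈ 𝒞, u ∈ C ∧ v ∈ C := by
    intro u v hadj
    rcases classify h u with ⟨i, j, rfl⟩ | ⟨m, hu⟩ | ⟨p, hu⟩ <;>
      rcases classify h v with ⟨i', j', rfl⟩ | ⟨m', hv⟩ | ⟨p', hv⟩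
    · exact hWWc _ _ _ _ hadj
    · exact hWUc _ _ _ _ hv hadj.symm
    · exact hWDc _ _ _ _ hv hadj.symm
    · exact Csymm (hWUc _ _ _ _ hu hadj)
    · exact hUUc _ _ _ _ hu hv hadj
    · exact hUDc _ _ _ _ hu hv
    · exact Csymm (hWDc _ _ _ _ hu hadj)
    · exact Csymm (hUDc _ _ _ _ hv hu)
    · exact hDDc _ _ _ _ hu hv hadj
  -- cardinality
  set FU : Finset V := uF 0 ∪ uF 1 ∪ uF 2 with hFU
  set FD : Finset V := dF 0 ∪ dF 1 ∪ dF 2 with hFD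
  have hFUc : FU.card = (uF 0).card + (uF 1).card + (uF 2).card := by
    have d01 : Disjoint (uF 0) (uF 1) := by
      rw [Finset.disjoint_left]
      intro x hx hy
      exact Set.disjoint_left.1 (h.up_disj 0 1 (by decide)) ((huFmem 0 x).1 hx)
        ((huFmem 1 x).1 hy)
    have d02 : Disjoint (uF 0) (uF 2) := by
      rw [Finset.disjoint_left]
      intro x hx hy
      exact Set.disjoint_left.1 (h.up_disj 0 2 (by decide)) ((huFmem 0 x).1 hx)
        ((huFmem 2 x).1 hy)
    have d12 : Disjoint (uF 1) (uF 2) := by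
      rw [Finset.disjoint_left]
      intro x hx hy
      exact Set.disjoint_left.1 (h.up_disj 1 2 (by decide)) ((huFmem 1 x).1 hx)
        ((huFmem 2 x).1 hy)
    rw [hFU, Finset.card_union_of_disjoint, Finset.card_union_of_disjoint d01]
    rw [Finset.disjoint_union_left]
    exact ⟨d02, d12⟩
  have hFDc : FD.card = (dF 0).card + (dF 1).card + (dF 2).card := by
    have d01 : Disjoint (dF 0) (dF 1) := by
      rw [Finset.disjoint_left]
      intro x hx hy
      exact Set.disjoint_left.1 (h.low_disj 0 1 (by decide)) ((hdFmem 0 x).1 hx)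
        ((hdFmem 1 x).1 hy)
    have d02 : Disjoint (dF 0) (dF 2) := by
      rw [Finset.disjoint_left]
      intro x hx hy
      exact Set.disjoint_left.1 (h.low_disj 0 2 (by decide)) ((hdFmem 0 x).1 hx)
        ((hdFmem 2 x).1 hy)
    have d12 : Disjoint (dF 1) (dF 2) := by
      rw [Finset.disjoint_left]
      intro x hx hy
      exact Set.disjoint_left.1 (h.low_disj 1 2 (by decide)) ((hdFmem 1 x).1 hx)
        ((hdFmem 2 x).1 hy)
    rw [hFD, Finset.card_union_of_disjoint, Finset.card_union_of_disjoint d01]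
    rw [Finset.disjoint_union_left]
    exact ⟨d02, d12⟩
  -- the spare count
  have hZcard : ((Finset.univ.filter P).image (ZA G Vup Vlow)).card ≤ 2 := by
    have hnotall : ¬ ∀ m, P m := by
      intro hall
      obtain ⟨u0, hu0U, hu0n⟩ := (hall 0).1
      obtain ⟨u1, hu1U, hu1n⟩ := (hall 1).1
      obtain ⟨u2, hu2U, hu2n⟩ := (hall 2).1
      have e20 : ((2 : Fin 3) + 2) = 1 := by decide
      have e10 : ((1 : Fin 3) + 2) = 0 := by decide
      have e02 : ((0 : Fin 3) + 2) = 2 := by decide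
      have ne01 : u0 ≠ u1 := fun e =>
        Set.disjoint_left.1 (h.up_disj 0 1 (by decide)) hu0U (e ▸ hu1U)
      have ne02 : u0 ≠ u2 := fun e =>
        Set.disjoint_left.1 (h.up_disj 0 2 (by decide)) hu0U (e ▸ hu2U)
      have ne12 : u1 ≠ u2 := fun e =>
        Set.disjoint_left.1 (h.up_disj 1 2 (by decide)) hu1U (e ▸ hu2U)
      have na01 : ¬ G.Adj u0 u1 := fun hadj => hu1n u0 (e10 ▸ hu0U) hadj.symm
      have na02 : ¬ G.Adj u0 u2 := fun hadj => hu0n u2 (e02 ▸ hu2U) hadj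
      have na12 : ¬ G.Adj u1 u2 := fun hadj => hu2n u1 (e20 ▸ hu1U) hadj.symm
      exact h.up_no_triad u0 (Set.mem_iUnion.2 ⟨0, hu0U⟩) u1 (Set.mem_iUnion.2 ⟨1, hu1U⟩)
        u2 (Set.mem_iUnion.2 ⟨2, hu2U⟩) ⟨ne01, ne02, ne12, na01, na02, na12⟩
    obtain ⟨m0, hm0⟩ := not_forall.mp hnotall
    have hsub : Finset.univ.filter P ⊆ Finset.univ.erase m0 := by
      intro m hm
      exact Finset.mem_erase.2 ⟨fun e => hm0 (e ▸ (Finset.mem_filter.1 hm).2),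
        Finset.mem_univ m⟩
    calc ((Finset.univ.filter P).image (ZA G Vup Vlow)).card
        ≤ (Finset.univ.filter P).card := Finset.card_image_le
      _ ≤ (Finset.univ.erase m0).card := Finset.card_le_card hsub
      _ ≤ 2 := by
          rw [Finset.card_erase_of_mem (Finset.mem_univ _), Finset.card_univ]
          simp
  have hcard : 𝒞.card ≤ 8 + FU.card + FD.card := by
    rw [h𝒞]
    have c1 : (Finset.univ.image (FR a Vup)).card ≤ 3 :=
      Finset.card_image_le.trans (by simp)
    have c2 : (Finset.univ.image (FC a Vlow)).card ≤ 3 :=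
      Finset.card_image_le.trans (by simp)
    have c3 : ((uF 0).image (TA G a Vup Vlow 0) ∪ (uF 1).image (TA G a Vup Vlow 1) ∪
        (uF 2).image (TA G a Vup Vlow 2)).card ≤ FU.card := by
      rw [hFUc]
      calc ((uF 0).image (TA G a Vup Vlow 0) ∪ (uF 1).image (TA G a Vup Vlow 1) ∪
          (uF 2).image (TA G a Vup Vlow 2)).card
          ≤ ((uF 0).image (TA G a Vup Vlow 0) ∪ (uF 1).image (TA G a Vup Vlow 1)).card
            + ((uF 2).image (TA G a Vup Vlow 2)).card := Finset.card_union_le _ _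
        _ ≤ ((uF 0).image (TA G a Vup Vlow 0)).card
            + ((uF 1).image (TA G a Vup Vlow 1)).card
            + ((uF 2).image (TA G a Vup Vlow 2)).card := by
              have := Finset.card_union_le ((uF 0).image (TA G a Vup Vlow 0))
                ((uF 1).image (TA G a Vup Vlow 1))
              omega
        _ ≤ (uF 0).card + (uF 1).card + (uF 2).card := by
              have h0 := Finset.card_image_le (s := uF 0) (f := TA G a Vup Vlow 0)
              have h1 := Finset.card_image_le (s := uF 1) (f := TA G a Vup Vlow 1)
              have h2 := Finset.card_image_le (s := uF 2) (f := TA G a Vup Vlow 2)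
              omega
    have c4 : ((dF 0).image (SA G a Vup Vlow 0) ∪ (dF 1).image (SA G a Vup Vlow 1) ∪
        (dF 2).image (SA G a Vup Vlow 2)).card ≤ FD.card := by
      rw [hFDc]
      calc ((dF 0).image (SA G a Vup Vlow 0) ∪ (dF 1).image (SA G a Vup Vlow 1) ∪
          (dF 2).image (SA G a Vup Vlow 2)).card
          ≤ ((dF 0).image (SA G a Vup Vlow 0) ∪ (dF 1).image (SA G a Vup Vlow 1)).card
            + ((dF 2).image (SA G a Vup Vlow 2)).card := Finset.card_union_le _ _
        _ ≤ ((dF 0).image (SA G a Vup Vlow 0)).card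
            + ((dF 1).image (SA G a Vup Vlow 1)).card
            + ((dF 2).image (SA G a Vup Vlow 2)).card := by
              have := Finset.card_union_le ((dF 0).image (SA G a Vup Vlow 0))
                ((dF 1).image (SA G a Vup Vlow 1))
              omega
        _ ≤ (dF 0).card + (dF 1).card + (dF 2).card := by
              have h0 := Finset.card_image_le (s := dF 0) (f := SA G a Vup Vlow 0)
              have h1 := Finset.card_image_le (s := dF 1) (f := SA G a Vup Vlow 1)
              have h2 := Finset.card_image_le (s := dF 2) (f := SA G a Vup Vlow 2)
              omega
    have t1 := Finset.card_union_le
      ((Finset.univ.image (FR a Vup)) ∪ (Finset.univ.image (FC a Vlow)) ∪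
        ((uF 0).image (TA G a Vup Vlow 0) ∪ (uF 1).image (TA G a Vup Vlow 1) ∪
          (uF 2).image (TA G a Vup Vlow 2)) ∪
        ((dF 0).image (SA G a Vup Vlow 0) ∪ (dF 1).image (SA G a Vup Vlow 1) ∪
          (dF 2).image (SA G a Vup Vlow 2)))
      ((Finset.univ.filter P).image (ZA G Vup Vlow))
    have t2 := Finset.card_union_le
      ((Finset.univ.image (FR a Vup)) ∪ (Finset.univ.image (FC a Vlow)) ∪
        ((uF 0).image (TA G a Vup Vlow 0) ∪ (uF 1).image (TA G a Vup Vlow 1) ∪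
          (uF 2).image (TA G a Vup Vlow 2)))
      ((dF 0).image (SA G a Vup Vlow 0) ∪ (dF 1).image (SA G a Vup Vlow 1) ∪
        (dF 2).image (SA G a Vup Vlow 2))
    have t3 := Finset.card_union_le
      ((Finset.univ.image (FR a Vup)) ∪ (Finset.univ.image (FC a Vlow)))
      ((uF 0).image (TA G a Vup Vlow 0) ∪ (uF 1).image (TA G a Vup Vlow 1) ∪
        (uF 2).image (TA G a Vup Vlow 2))
    have t4 := Finset.card_union_le (Finset.univ.image (FR a Vup))
      (Finset.univ.image (FC a Vlow))
    omega
  refine conclude h 𝒞 ⟨hcl, hcov⟩ FU FD ?_ ?_ hcard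
  · intro x hx
    rw [hFU] at hx
    rcases Finset.mem_union.1 hx with hx | hx
    · rcases Finset.mem_union.1 hx with hx | hx
      · exact ⟨0, (huFmem 0 x).1 hx⟩
      · exact ⟨1, (huFmem 1 x).1 hx⟩
    · exact ⟨2, (huFmem 2 x).1 hx⟩
  · intro x hx
    rw [hFD] at hx
    rcases Finset.mem_union.1 hx with hx | hx
    · rcases Finset.mem_union.1 hx with hx | hx
      · exact ⟨0, (hdFmem 0 x).1 hx⟩
      · exact ⟨1, (hdFmem 1 x).1 hx⟩
    · exact ⟨2, (hdFmem 2 x).1 hx⟩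

end MLK33
namespace MLK33

variable {V : Type*} (G : SimpleGraph V) (a : Fin 3 → Fin 3 → V) (Vup Vlow : Fin 3 → Set V)

def G1B (i0 : Fin 3) : Set V := {x | x ∈ Vup (i0 + 1) ∨ ∃ l, x = a (i0 + 2) l}

def G2B (i0 : Fin 3) : Set V := {x | x ∈ Vup (i0 + 2) ∨ ∃ l, x = a i0 l}

def EB (i0 p : Fin 3) : Set V :=
  {x | x ∈ Vlow p ∨ (∃ l, l ≠ p ∧ x = a (i0 + 1) l) ∨ x ∈ Vup (i0 + 2)}

def TB (i0 c : Fin 3) (u : V) : Set V :=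
  {x | x = u ∨ (G.Adj u x ∧ x ∈ Vup (i0 + 2)) ∨ (∃ l, l ≠ c ∧ x = a i0 l) ∨
    x ∈ Vlow c ∨ (Vlow c = ∅ ∧ x = a i0 c)}

def SB (i0 p : Fin 3) (w : V) : Set V :=
  {x | x = w ∨ (G.Adj w x ∧ x ∈ Vlow (p + 1)) ∨ (∃ k, k ≠ i0 + 1 ∧ x = a k (p + 2)) ∨
    x ∈ Vup (i0 + 1)}

variable {G a Vup Vlow}

section CliquesB
variable (h : IsMantledLK33Complement G a Vup Vlow)
include h

lemma isClique_G1B (i0 : Fin 3) : G.IsClique (G1B a Vup i0) := by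
  intro x hx y hy hne
  simp only [G1B, Set.mem_setOf_eq] at hx hy
  obtain hx | ⟨l, rfl⟩ := hx <;> obtain hy | ⟨l', rfl⟩ := hy
  · exact h.up_clique (i0 + 1) hx hy hne
  · exact h.up_compl (i0 + 1) x hx _ _ (fn4 i0)
  · exact (h.up_compl (i0 + 1) y hy _ _ (fn4 i0)).symm
  · exact adj_row h (fun e => hne (by rw [e]))

lemma isClique_G2B (i0 : Fin 3) : G.IsClique (G2B a Vup i0) := by
  intro x hx y hy hne
  simp only [G2B, Set.mem_setOf_eq] at hx hy
  obtain hx | ⟨l, rfl⟩ := hx <;> obtain hy | ⟨l', rfl⟩ := hy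
  · exact h.up_clique (i0 + 2) hx hy hne
  · exact h.up_compl (i0 + 2) x hx _ _ (fn2 i0).symm
  · exact (h.up_compl (i0 + 2) y hy _ _ (fn2 i0).symm).symm
  · exact adj_row h (fun e => hne (by rw [e]))

lemma isClique_EB (i0 p : Fin 3) : G.IsClique (EB a Vup Vlow i0 p) := by
  intro x hx y hy hne
  simp only [EB, Set.mem_setOf_eq] at hx hy
  obtain hx | ⟨l, hl, rfl⟩ | hx := hx <;> obtain hy | ⟨l', hl', rfl⟩ | hy := hy
  · exact h.low_clique p hx hy hne
  · exact h.low_compl p x hx _ _ hl'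
  · exact (h.up_low_compl (i0 + 2) p y hy x hx).symm
  · exact (h.low_compl p y hy _ _ hl).symm
  · exact adj_row h (fun e => hne (by rw [e]))
  · exact (h.up_compl (i0 + 2) y hy _ _ (fn3 i0)).symm
  · exact h.up_low_compl (i0 + 2) p x hx y hy
  · exact h.up_compl (i0 + 2) x hx _ _ (fn3 i0)
  · exact h.up_clique (i0 + 2) hx hy hne

lemma isClique_TB {i0 c : Fin 3} {u : V} (hu : u ∈ Vup (i0 + 1)) :
    G.IsClique (TB G a Vup Vlow i0 c u) := by
  intro x hx y hy hne
  simp only [TB, Set.mem_setOf_eq] at hx hy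
  obtain rfl | ⟨hadj, hxU⟩ | ⟨l, hl, rfl⟩ | hxD | ⟨hVc, rfl⟩ := hx <;>
    obtain rfl | ⟨hadj', hyU⟩ | ⟨l', hl', rfl⟩ | hyD | ⟨hVc', rfl⟩ := hy
  · exact absurd rfl hne
  · exact hadj'
  · exact h.up_compl (i0 + 1) x hu _ _ (fn1 i0).symm
  · exact h.up_low_compl (i0 + 1) c x hu y hyD
  · exact h.up_compl (i0 + 1) x hu _ _ (fn1 i0).symm
  · exact hadj.symm
  · exact h.up_clique (i0 + 2) hxU hyU hne
  · exact h.up_compl (i0 + 2) x hxU _ _ (fn2 i0).symm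
  · exact h.up_low_compl (i0 + 2) c x hxU y hyD
  · exact h.up_compl (i0 + 2) x hxU _ _ (fn2 i0).symm
  · exact (h.up_compl (i0 + 1) y hu _ _ (fn1 i0).symm).symm
  · exact (h.up_compl (i0 + 2) y hyU _ _ (fn2 i0).symm).symm
  · exact adj_row h (fun e => hne (by rw [e]))
  · exact (h.low_compl c y hyD _ _ hl).symm
  · exact adj_row h hl
  · exact (h.up_low_compl (i0 + 1) c y hu x hxD).symm
  · exact (h.up_low_compl (i0 + 2) c y hyU x hxD).symm
  · exact h.low_compl c x hxD _ _ hl'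
  · exact h.low_clique c hxD hyD hne
  · exact absurd (hVc' ▸ hxD) (Set.notMem_empty x)
  · exact (h.up_compl (i0 + 1) y hu _ _ (fn1 i0).symm).symm
  · exact (h.up_compl (i0 + 2) y hyU _ _ (fn2 i0).symm).symm
  · exact adj_row h (fun e => hl' e.symm)
  · exact absurd (hVc ▸ hyD) (Set.notMem_empty y)
  · exact absurd rfl hne

lemma isClique_SB {i0 p : Fin 3} {w : V} (hw : w ∈ Vlow p) :
    G.IsClique (SB G a Vup Vlow i0 p w) := by
  intro x hx y hy hne
  simp only [SB, Set.mem_setOf_eq] at hx hy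
  obtain rfl | ⟨hadj, hxD⟩ | ⟨k, hk, rfl⟩ | hxU := hx <;>
    obtain rfl | ⟨hadj', hyD⟩ | ⟨k', hk', rfl⟩ | hyU := hy
  · exact absurd rfl hne
  · exact hadj'
  · exact h.low_compl p x hw _ _ (fn2 p)
  · exact (h.up_low_compl (i0 + 1) p y hyU x hw).symm
  · exact hadj.symm
  · exact h.low_clique (p + 1) hxD hyD hne
  · exact h.low_compl (p + 1) x hxD _ _ (fn4 p)
  · exact (h.up_low_compl (i0 + 1) (p + 1) y hyU x hxD).symm
  · exact (h.low_compl p y hw _ _ (fn2 p)).symm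
  · exact (h.low_compl (p + 1) y hyD _ _ (fn4 p)).symm
  · exact adj_col h (fun e => hne (by rw [e]))
  · exact (h.up_compl (i0 + 1) y hyU _ _ hk).symm
  · exact h.up_low_compl (i0 + 1) p x hxU y hw
  · exact h.up_low_compl (i0 + 1) (p + 1) x hxU y hyD
  · exact h.up_compl (i0 + 1) x hxU _ _ hk'
  · exact h.up_clique (i0 + 1) hxU hyU hne

end CliquesB

end MLK33
namespace MLK33

variable {V : Type*} [Fintype V] {G : SimpleGraph V} {a : Fin 3 → Fin 3 → V}
  {Vup Vlow : Fin 3 → Set V}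

lemma lemB (h : IsMantledLK33Complement G a Vup Vlow) (i0 : Fin 3)
    (hE : Vup i0 = ∅) : edgeCliqueCoverNumber G ≤ Fintype.card V - 1 := by
  classical
  obtain ⟨c, hc⟩ : ∃ c : Fin 3, Vlow c = ∅ ∨ (Vlow (c + 1)).Nonempty := by
    by_cases h1 : (Vlow (0 + 1 : Fin 3)).Nonempty
    · exact ⟨0, Or.inr h1⟩
    · exact ⟨0 + 1, Or.inl (Set.not_nonempty_iff_eq_empty.mp h1)⟩
  set uF1 : Finset V := (Vup (i0 + 1)).toFinite.toFinset with huF1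
  set dF : Fin 3 → Finset V := fun p => (Vlow p).toFinite.toFinset with hdF
  have huF1mem : ∀ x : V, x ∈ uF1 ↔ x ∈ Vup (i0 + 1) := by
    intro x; rw [huF1]; exact Set.Finite.mem_toFinset _
  have hdFmem : ∀ p (x : V), x ∈ dF p ↔ x ∈ Vlow p := by
    intro p x; rw [hdF]; exact Set.Finite.mem_toFinset _
  set 𝒞 : Finset (Set V) :=
    ({G1B a Vup i0, G2B a Vup i0} : Finset (Set V)) ∪
      (Finset.univ.image (EB a Vup Vlow i0)) ∪ (Finset.univ.image (FC a Vlow)) ∪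
      (uF1.image (TB G a Vup Vlow i0 c)) ∪
      ((dF 0).image (SB G a Vup Vlow i0 0) ∪ (dF 1).image (SB G a Vup Vlow i0 1) ∪
        (dF 2).image (SB G a Vup Vlow i0 2)) with h𝒞
  have hmemG1 : G1B a Vup i0 ∈ 𝒞 := by
    rw [h𝒞]
    exact Finset.mem_union_left _ (Finset.mem_union_left _ (Finset.mem_union_left _
      (Finset.mem_union_left _ (Finset.mem_insert_self _ _))))
  have hmemG2 : G2B a Vup i0 ∈ 𝒞 := by
    rw [h𝒞]
    exact Finset.mem_union_left _ (Finset.mem_union_left _ (Finset.mem_union_left _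
      (Finset.mem_union_left _ (Finset.mem_insert_of_mem (Finset.mem_singleton_self _)))))
  have hmemEB : ∀ p, EB a Vup Vlow i0 p ∈ 𝒞 := by
    intro p
    rw [h𝒞]
    exact Finset.mem_union_left _ (Finset.mem_union_left _ (Finset.mem_union_left _
      (Finset.mem_union_right _ (Finset.mem_image_of_mem _ (Finset.mem_univ p)))))
  have hmemFC : ∀ p, FC a Vlow p ∈ 𝒞 := by
    intro p
    rw [h𝒞]
    exact Finset.mem_union_left _ (Finset.mem_union_left _ (Finset.mem_union_right _
      (Finset.mem_image_of_mem _ (Finset.mem_univ p))))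
  have hmemTB : ∀ u ∈ Vup (i0 + 1), TB G a Vup Vlow i0 c u ∈ 𝒞 := by
    intro u hu
    rw [h𝒞]
    exact Finset.mem_union_left _ (Finset.mem_union_right _
      (Finset.mem_image_of_mem _ ((huF1mem u).2 hu)))
  have hmemSB : ∀ p, ∀ w ∈ Vlow p, SB G a Vup Vlow i0 p w ∈ 𝒞 := by
    intro p w hw
    rw [h𝒞]
    refine Finset.mem_union_right _ ?_
    fin_cases p
    · exact Finset.mem_union_left _ (Finset.mem_union_left _
        (Finset.mem_image_of_mem _ ((hdFmem 0 w).2 hw)))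
    · exact Finset.mem_union_left _ (Finset.mem_union_right _
        (Finset.mem_image_of_mem _ ((hdFmem 1 w).2 hw)))
    · exact Finset.mem_union_right _ (Finset.mem_image_of_mem _ ((hdFmem 2 w).2 hw))
  have hcl : ∀ C ∈ 𝒞, G.IsClique C := by
    intro C hC
    rw [h𝒞] at hC
    simp only [Finset.mem_union, Finset.mem_image, Finset.mem_univ, true_and,
      Finset.mem_insert, Finset.mem_singleton] at hC
    rcases hC with (((((rfl | rfl) | ⟨p, rfl⟩) | ⟨p, rfl⟩) | ⟨u, hu, rfl⟩) | hSS)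
    · exact isClique_G1B h i0
    · exact isClique_G2B h i0
    · exact isClique_EB h i0 p
    · exact isClique_FC h p
    · exact isClique_TB h ((huF1mem u).1 hu)
    · rcases hSS with (⟨w, hw, rfl⟩ | ⟨w, hw, rfl⟩) | ⟨w, hw, rfl⟩
      · exact isClique_SB h ((hdFmem 0 w).1 hw)
      · exact isClique_SB h ((hdFmem 1 w).1 hw)
      · exact isClique_SB h ((hdFmem 2 w).1 hw)
  set Cov : V → V → Prop := fun u v => ∃ C ∈ 𝒞, u ∈ C ∧ v ∈ C with hCov
  have Csymm : ∀ {u v}, Cov u v → Cov v u := by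
    rintro u v ⟨C, hC, h1, h2⟩; exact ⟨C, hC, h2, h1⟩
  have hWWc : ∀ i j i' j', G.Adj (a i j) (a i' j') → Cov (a i j) (a i' j') := by
    intro i j i' j' hadj
    rcases adj_WW_cases h hadj with rfl | rfl
    · have hjj : j ≠ j' := fun e => hadj.ne (by rw [e])
      rcases fin3_all i i0 with rfl | rfl | rfl
      · exact ⟨G2B a Vup i, hmemG2, Or.inr ⟨j, rfl⟩, Or.inr ⟨j', rfl⟩⟩
      · obtain ⟨q, hq1, hq2⟩ := fin3_third j j' hjj
        exact ⟨EB a Vup Vlow i0 q, hmemEB q, Or.inr (Or.inl ⟨j, hq1, rfl⟩),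
          Or.inr (Or.inl ⟨j', hq2, rfl⟩)⟩
      · exact ⟨G1B a Vup i0, hmemG1, Or.inr ⟨j, rfl⟩, Or.inr ⟨j', rfl⟩⟩
    · refine ⟨FC a Vlow (j + 2), hmemFC _, Or.inr ⟨i, ?_⟩, Or.inr ⟨i', ?_⟩⟩ <;> rw [fa21]
  have hWUc : ∀ i j m u, u ∈ Vup m → G.Adj u (a i j) → Cov (a i j) u := by
    intro i j m u hu hadj
    have hm : m ≠ i0 := fun e => Set.notMem_empty u (hE ▸ e ▸ hu)
    have hi : i ≠ m := fun e => h.up_anti m u hu j (e ▸ hadj)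
    rcases fin3_cases m i0 hm with rfl | rfl
    · rcases fin3_all i i0 with h1 | rfl | rfl
      · rw [h1]
        by_cases hj : j = c
        · rw [hj]
          by_cases hVc : Vlow c = ∅
          · exact ⟨TB G a Vup Vlow i0 c u, hmemTB u hu,
              Or.inr (Or.inr (Or.inr (Or.inr ⟨hVc, rfl⟩))), Or.inl rfl⟩
          · obtain ⟨w, hw⟩ := hc.resolve_left hVc
            refine ⟨SB G a Vup Vlow i0 (c + 1) w, hmemSB _ w hw,
              Or.inr (Or.inr (Or.inl ⟨i0, (fn1 i0).symm, ?_⟩)),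
              Or.inr (Or.inr (Or.inr hu))⟩
            rw [fa12]
        · exact ⟨TB G a Vup Vlow i0 c u, hmemTB u hu,
            Or.inr (Or.inr (Or.inl ⟨j, hj, rfl⟩)), Or.inl rfl⟩
      · exact absurd rfl hi
      · exact ⟨G1B a Vup i0, hmemG1, Or.inr ⟨j, rfl⟩, Or.inl hu⟩
    · rcases fin3_all i i0 with h1 | rfl | rfl
      · rw [h1]
        exact ⟨G2B a Vup i0, hmemG2, Or.inr ⟨j, rfl⟩, Or.inl hu⟩
      · exact ⟨EB a Vup Vlow i0 (j + 1), hmemEB _,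
          Or.inr (Or.inl ⟨j, (fn1 j).symm, rfl⟩), Or.inr (Or.inr hu)⟩
      · exact absurd rfl hi
  have hWDc : ∀ i j p w, w ∈ Vlow p → G.Adj w (a i j) → Cov (a i j) w := by
    intro i j p w hw hadj
    have hj : j ≠ p := fun e => h.low_anti p w hw i (e ▸ hadj)
    rcases fin3_cases j p hj with rfl | rfl
    · exact ⟨FC a Vlow p, hmemFC p, Or.inr ⟨i, rfl⟩, Or.inl hw⟩
    · by_cases hi : i = i0 + 1
      · subst hi
        exact ⟨EB a Vup Vlow i0 p, hmemEB p, Or.inr (Or.inl ⟨p + 2, fn2 p, rfl⟩),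
          Or.inl hw⟩
      · exact ⟨SB G a Vup Vlow i0 p w, hmemSB p w hw,
          Or.inr (Or.inr (Or.inl ⟨i, hi, rfl⟩)), Or.inl rfl⟩
  have hUUc : ∀ m m' u u', u ∈ Vup m → u' ∈ Vup m' → G.Adj u u' → Cov u u' := by
    intro m m' u u' hu hu' hadj
    have hm : m ≠ i0 := fun e => Set.notMem_empty u (hE ▸ e ▸ hu)
    have hm' : m' ≠ i0 := fun e => Set.notMem_empty u' (hE ▸ e ▸ hu')
    by_cases hmm : m' = m
    · subst hmm
      rcases fin3_cases m' i0 hm' with rfl | rfl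
      · exact ⟨G1B a Vup i0, hmemG1, Or.inl hu, Or.inl hu'⟩
      · exact ⟨G2B a Vup i0, hmemG2, Or.inl hu, Or.inl hu'⟩
    · rcases fin3_two m m' i0 hm hm' (fun e => hmm e.symm) with ⟨e1, e2⟩ | ⟨e1, e2⟩
      · subst e1; subst e2
        exact ⟨TB G a Vup Vlow i0 c u, hmemTB u hu, Or.inl rfl,
          Or.inr (Or.inl ⟨hadj, hu'⟩)⟩
      · subst e1; subst e2
        exact ⟨TB G a Vup Vlow i0 c u', hmemTB u' hu',
          Or.inr (Or.inl ⟨hadj.symm, hu⟩), Or.inl rfl⟩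
  have hDDc : ∀ p p' w w', w ∈ Vlow p → w' ∈ Vlow p' → G.Adj w w' → Cov w w' := by
    intro p p' w w' hw hw' hadj
    by_cases hpp : p' = p
    · subst hpp
      exact ⟨FC a Vlow p', hmemFC p', Or.inl hw, Or.inl hw'⟩
    · rcases fin3_cases p' p hpp with rfl | rfl
      · exact ⟨SB G a Vup Vlow i0 p w, hmemSB p w hw, Or.inl rfl,
          Or.inr (Or.inl ⟨hadj, hw'⟩)⟩
      · refine ⟨SB G a Vup Vlow i0 (p + 2) w', hmemSB _ w' hw',
          Or.inr (Or.inl ⟨hadj.symm, ?_⟩), Or.inl rfl⟩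
        rw [fa21]; exact hw
  have hUDc : ∀ m p u w, u ∈ Vup m → w ∈ Vlow p → Cov u w := by
    intro m p u w hu hw
    have hm : m ≠ i0 := fun e => Set.notMem_empty u (hE ▸ e ▸ hu)
    rcases fin3_cases m i0 hm with rfl | rfl
    · exact ⟨SB G a Vup Vlow i0 p w, hmemSB p w hw,
        Or.inr (Or.inr (Or.inr hu)), Or.inl rfl⟩
    · exact ⟨EB a Vup Vlow i0 p, hmemEB p, Or.inr (Or.inr hu), Or.inl hw⟩
  have hcov : ∀ ⦃u v : V⦄, G.Adj u v → ∃ C ∈ 𝒞, u ∈ C ∧ v ∈ C := by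
    intro u v hadj
    rcases classify h u with ⟨i, j, rfl⟩ | ⟨m, hu⟩ | ⟨p, hu⟩ <;>
      rcases classify h v with ⟨i', j', rfl⟩ | ⟨m', hv⟩ | ⟨p', hv⟩
    · exact hWWc _ _ _ _ hadj
    · exact hWUc _ _ _ _ hv hadj.symm
    · exact hWDc _ _ _ _ hv hadj.symm
    · exact Csymm (hWUc _ _ _ _ hu hadj)
    · exact hUUc _ _ _ _ hu hv hadj
    · exact hUDc _ _ _ _ hu hv
    · exact Csymm (hWDc _ _ _ _ hu hadj)
    · exact Csymm (hUDc _ _ _ _ hv hu)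
    · exact hDDc _ _ _ _ hu hv hadj
  set FD : Finset V := dF 0 ∪ dF 1 ∪ dF 2 with hFD
  have hFDc : FD.card = (dF 0).card + (dF 1).card + (dF 2).card := by
    have d01 : Disjoint (dF 0) (dF 1) := by
      rw [Finset.disjoint_left]
      intro x hx hy
      exact Set.disjoint_left.1 (h.low_disj 0 1 (by decide)) ((hdFmem 0 x).1 hx)
        ((hdFmem 1 x).1 hy)
    have d02 : Disjoint (dF 0) (dF 2) := by
      rw [Finset.disjoint_left]
      intro x hx hy
      exact Set.disjoint_left.1 (h.low_disj 0 2 (by decide)) ((hdFmem 0 x).1 hx)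
        ((hdFmem 2 x).1 hy)
    have d12 : Disjoint (dF 1) (dF 2) := by
      rw [Finset.disjoint_left]
      intro x hx hy
      exact Set.disjoint_left.1 (h.low_disj 1 2 (by decide)) ((hdFmem 1 x).1 hx)
        ((hdFmem 2 x).1 hy)
    rw [hFD, Finset.card_union_of_disjoint, Finset.card_union_of_disjoint d01]
    rw [Finset.disjoint_union_left]
    exact ⟨d02, d12⟩
  have hcard : 𝒞.card ≤ 8 + uF1.card + FD.card := by
    rw [h𝒞]
    have c0 : ({G1B a Vup i0, G2B a Vup i0} : Finset (Set V)).card ≤ 2 :=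
      (Finset.card_insert_le _ _).trans (by simp)
    have c1 : (Finset.univ.image (EB a Vup Vlow i0)).card ≤ 3 :=
      Finset.card_image_le.trans (by simp)
    have c2 : (Finset.univ.image (FC a Vlow)).card ≤ 3 :=
      Finset.card_image_le.trans (by simp)
    have c3 : (uF1.image (TB G a Vup Vlow i0 c)).card ≤ uF1.card :=
      Finset.card_image_le
    have c4 : ((dF 0).image (SB G a Vup Vlow i0 0) ∪ (dF 1).image (SB G a Vup Vlow i0 1) ∪
        (dF 2).image (SB G a Vup Vlow i0 2)).card ≤ FD.card := by
      rw [hFDc]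
      have t1 := Finset.card_union_le
        ((dF 0).image (SB G a Vup Vlow i0 0) ∪ (dF 1).image (SB G a Vup Vlow i0 1))
        ((dF 2).image (SB G a Vup Vlow i0 2))
      have t2 := Finset.card_union_le ((dF 0).image (SB G a Vup Vlow i0 0))
        ((dF 1).image (SB G a Vup Vlow i0 1))
      have h0 := Finset.card_image_le (s := dF 0) (f := SB G a Vup Vlow i0 0)
      have h1 := Finset.card_image_le (s := dF 1) (f := SB G a Vup Vlow i0 1)
      have h2 := Finset.card_image_le (s := dF 2) (f := SB G a Vup Vlow i0 2)
      omega
    have t1 := Finset.card_union_le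
      (({G1B a Vup i0, G2B a Vup i0} : Finset (Set V)) ∪
        (Finset.univ.image (EB a Vup Vlow i0)) ∪ (Finset.univ.image (FC a Vlow)) ∪
        (uF1.image (TB G a Vup Vlow i0 c)))
      ((dF 0).image (SB G a Vup Vlow i0 0) ∪ (dF 1).image (SB G a Vup Vlow i0 1) ∪
        (dF 2).image (SB G a Vup Vlow i0 2))
    have t2 := Finset.card_union_le
      (({G1B a Vup i0, G2B a Vup i0} : Finset (Set V)) ∪
        (Finset.univ.image (EB a Vup Vlow i0)) ∪ (Finset.univ.image (FC a Vlow)))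
      (uF1.image (TB G a Vup Vlow i0 c))
    have t3 := Finset.card_union_le
      (({G1B a Vup i0, G2B a Vup i0} : Finset (Set V)) ∪
        (Finset.univ.image (EB a Vup Vlow i0)))
      (Finset.univ.image (FC a Vlow))
    have t4 := Finset.card_union_le ({G1B a Vup i0, G2B a Vup i0} : Finset (Set V))
      (Finset.univ.image (EB a Vup Vlow i0))
    omega
  refine conclude h 𝒞 ⟨hcl, hcov⟩ uF1 FD ?_ ?_ hcard
  · intro x hx
    exact ⟨i0 + 1, (huF1mem x).1 hx⟩
  · intro x hx
    rw [hFD] at hx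
    rcases Finset.mem_union.1 hx with hx | hx
    · rcases Finset.mem_union.1 hx with hx | hx
      · exact ⟨0, (hdFmem 0 x).1 hx⟩
      · exact ⟨1, (hdFmem 1 x).1 hx⟩
    · exact ⟨2, (hdFmem 2 x).1 hx⟩

end MLK33
namespace MLK33

variable {V : Type*} {G : SimpleGraph V} {a : Fin 3 → Fin 3 → V} {Vup Vlow : Fin 3 → Set V}

lemma transpose (h : IsMantledLK33Complement G a Vup Vlow) :
    IsMantledLK33Complement G (fun i j => a j i) Vlow Vup where
  a_inj := fun i j i' j' he => ⟨(h.a_inj j i j' i' he).2, (h.a_inj j i j' i' he).1⟩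
  a_notmem_up := fun i j l => h.a_notmem_low j i l
  a_notmem_low := fun i j l => h.a_notmem_up j i l
  up_disj := h.low_disj
  low_disj := h.up_disj
  up_low_disj := fun l l' => (h.up_low_disj l' l).symm
  cover := by
    have hcov := h.cover
    rw [Set.eq_univ_iff_forall] at hcov ⊢
    intro x
    specialize hcov x
    simp only [Set.mem_union, Set.mem_iUnion, Set.mem_singleton_iff] at hcov ⊢
    rcases hcov with (⟨i, j, e⟩ | h2) | h3
    · exact Or.inl (Or.inl ⟨j, i, e⟩)
    · exact Or.inr h2
    · exact Or.inl (Or.inr h3)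
  a_adj := fun i j i' j' hne => (h.a_adj j i j' i' hne.symm).trans or_comm
  up_clique := h.low_clique
  low_clique := h.up_clique
  up_anti := fun l v hv j => h.low_anti l v hv j
  up_compl := fun l v hv i j hne => h.low_compl l v hv j i hne
  low_anti := fun l v hv i => h.up_anti l v hv i
  low_compl := fun l v hv i j hne => h.up_compl l v hv j i hne
  up_low_compl := fun l l' u hu w hw => (h.up_low_compl l' l w hw u hu).symm
  up_no_triad := h.low_no_triad
  low_no_triad := h.up_no_triad

end MLK33

/-- If `G` is the complement of a mantled `L(K_{3,3})` on `n` vertices, then `cc(G) ≤ n−1`. -/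
theorem stmt_15 {V : Type*} [Fintype V] (G : SimpleGraph V)
    (a : Fin 3 → Fin 3 → V) (Vup Vlow : Fin 3 → Set V)
    (h : IsMantledLK33Complement G a Vup Vlow) :
    edgeCliqueCoverNumber G ≤ Fintype.card V - 1 := by
  classical
  by_cases hU : ∃ i0, Vup i0 = ∅
  · obtain ⟨i0, hE⟩ := hU
    exact MLK33.lemB h i0 hE
  · by_cases hD : ∃ j0, Vlow j0 = ∅
    · obtain ⟨j0, hE⟩ := hD
      exact MLK33.lemB (MLK33.transpose h) j0 hE
    · push_neg at hU hD
      exact MLK33.lemA h hU hD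
end

section
/- Let G be a claw-free graph whose complement contains an induced rotator centered as ρ = (s_1^1,s_2^2,s_3^3; t_3^1,t_3^2,t_3^3; r_1^3,r_2^3,r_3^3), and suppose G is antiprismatic. Then the twelve sets S_j^i(ρ) for (i,j) ∈ J, T^i(ρ), R_i(ρ) for i ∈ {1,2,3} (defined by adjacency patterns to the rotator vertices) partition the remaining vertices V(G)∖ρ, and each of these twelve sets is a clique of G. -/
open SimpleGraph

/-- A graph is claw-free if it has no induced subgraph isomorphic to `K_{1,3}`. -/
def ClawFree {V : Type*} (G : SimpleGraph V) : Prop :=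
  ∀ a b c d : V, G.Adj a b → G.Adj a c → G.Adj a d →
    ¬ G.Adj b c → ¬ G.Adj b d → ¬ G.Adj c d → b ≠ c → b ≠ d → c ≠ d → False

/-- A graph is antiprismatic if for every triad `{x, y, z}` and every vertex `v` outside it,
`v` has exactly two neighbours in `{x, y, z}`. -/
def Antiprismatic {V : Type*} (G : SimpleGraph V) : Prop :=
  ∀ x y z : V, IsTriad G x y z → ∀ v : V, v ≠ x → v ≠ y → v ≠ z →
    ((¬ G.Adj v x ∧ G.Adj v y ∧ G.Adj v z) ∨
     (G.Adj v x ∧ ¬ G.Adj v y ∧ G.Adj v z) ∨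
     (G.Adj v x ∧ G.Adj v y ∧ ¬ G.Adj v z))

/-- The complement of `G` contains an induced rotator
`ρ = (s_1^1, s_2^2, s_3^3; t_3^1, t_3^2, t_3^3; r_1^3, r_2^3, r_3^3)` (here `s i = s_i^i`,
`t i = t_3^i`, `r i = r_i^3`): in `G`, the `s i` form a triad, the `t i` and the `r i` form
triangles anticomplete to each other, and `s i` is adjacent to `t j` and to `r j` iff
`i ≠ j`. -/
structure IsRotatorComplement {V : Type*} (G : SimpleGraph V) (s t r : ZMod 3 → V) : Prop where
  s_inj : Function.Injective s
  t_inj : Function.Injective t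
  r_inj : Function.Injective r
  st_ne : ∀ i j : ZMod 3, s i ≠ t j
  sr_ne : ∀ i j : ZMod 3, s i ≠ r j
  tr_ne : ∀ i j : ZMod 3, t i ≠ r j
  s_triad : ∀ i j : ZMod 3, i ≠ j → ¬ G.Adj (s i) (s j)
  t_triangle : ∀ i j : ZMod 3, i ≠ j → G.Adj (t i) (t j)
  r_triangle : ∀ i j : ZMod 3, i ≠ j → G.Adj (r i) (r j)
  tr_anti : ∀ i j : ZMod 3, ¬ G.Adj (t i) (r j)
  st_adj : ∀ i j : ZMod 3, G.Adj (s i) (t j) ↔ i ≠ j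
  sr_adj : ∀ i j : ZMod 3, G.Adj (s i) (r j) ↔ i ≠ j

/- Auxiliary lemmas about `ZMod 3`. -/
theorem zmod3_a1 (k : ZMod 3) : k + 1 ≠ k := by revert k; decide
theorem zmod3_a2 (k : ZMod 3) : k + 2 ≠ k := by revert k; decide
theorem zmod3_a12 (k : ZMod 3) : k + 1 ≠ k + 2 := by revert k; decide
theorem zmod3_a21 (k : ZMod 3) : k + 2 ≠ k + 1 := by revert k; decide
theorem zmod3_cases (k j : ZMod 3) : j = k ∨ j = k + 1 ∨ j = k + 2 := by revert k j; decide
theorem zmod3_s1 (k : ZMod 3) : -((k + 1) + (k + 2)) = k := by revert k; decide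
theorem zmod3_s2 (k : ZMod 3) : -((k + 2) + (k + 1)) = k := by revert k; decide
theorem zmod3_ca (a b : ZMod 3) (h : a ≠ b) : -(a + b) ≠ a := by revert a b; decide
theorem zmod3_cb (a b : ZMod 3) (h : a ≠ b) : -(a + b) ≠ b := by revert a b; decide
theorem zmod3_cases' (a b j : ZMod 3) (h : a ≠ b) : j = a ∨ j = b ∨ j = -(a + b) := by
  revert a b j; decide

/-- The `t`-adjacency profile of each of the twelve sets. -/
def rotPt : ZMod 3 ⊕ ZMod 3 ⊕ ZMod 3 × ZMod 3 → ZMod 3 → Bool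
  | Sum.inl k, j => j = k
  | Sum.inr (Sum.inl _), _ => true
  | Sum.inr (Sum.inr (_, b)), j => j ≠ b

/-- The `r`-adjacency profile of each of the twelve sets. -/
def rotPr : ZMod 3 ⊕ ZMod 3 ⊕ ZMod 3 × ZMod 3 → ZMod 3 → Bool
  | Sum.inl _, _ => true
  | Sum.inr (Sum.inl k), j => j = k
  | Sum.inr (Sum.inr (a, _)), j => j ≠ a

theorem rotP_inj : ∀ x y : ZMod 3 ⊕ ZMod 3 ⊕ ZMod 3 × ZMod 3,
    (∀ j, rotPt x j = rotPt y j) → (∀ j, rotPr x j = rotPr y j) → x = y := by decide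

/-- Let `G` be claw-free and antiprismatic, and suppose `Ḡ` contains an induced rotator `ρ`.
Then the twelve sets `T^i(ρ)`, `R_i(ρ)` (`i ∈ {1,2,3}`) and `S_j^i(ρ)` (`i ≠ j`), defined by
their adjacency patterns to the rotator vertices, partition `V(G) ∖ ρ`, and each is a clique
of `G`. -/
theorem stmt_18 {V : Type*} (G : SimpleGraph V) (hclaw : ClawFree G)
    (hap : Antiprismatic G) (s t r : ZMod 3 → V)
    (hrot : IsRotatorComplement G s t r) :
    let V0 : Set V :=
      {v : V | (∀ i : ZMod 3, v ≠ s i) ∧ (∀ i : ZMod 3, v ≠ t i) ∧ (∀ i : ZMod 3, v ≠ r i)}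
    let Tset : ZMod 3 → Set V := fun i =>
      {v ∈ V0 | ¬ G.Adj v (s i) ∧ G.Adj v (r (i + 1)) ∧ G.Adj v (r (i + 2)) ∧
        ¬ G.Adj v (t (i + 1)) ∧ ¬ G.Adj v (t (i + 2))}
    let Rset : ZMod 3 → Set V := fun i =>
      {v ∈ V0 | ¬ G.Adj v (s i) ∧ G.Adj v (t (i + 1)) ∧ G.Adj v (t (i + 2)) ∧
        ¬ G.Adj v (r (i + 1)) ∧ ¬ G.Adj v (r (i + 2))}
    let Sset : ZMod 3 → ZMod 3 → Set V := fun a b =>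
      if a = b then ∅ else
        {v ∈ V0 | ¬ G.Adj v (s (-(a + b))) ∧ G.Adj v (t a) ∧ G.Adj v (r b) ∧
          ¬ G.Adj v (t b) ∧ ¬ G.Adj v (r a)}
    let D : ZMod 3 ⊕ ZMod 3 ⊕ ZMod 3 × ZMod 3 → Set V := fun x =>
      match x with
      | Sum.inl i => Tset i
      | Sum.inr (Sum.inl i) => Rset i
      | Sum.inr (Sum.inr (a, b)) => Sset a b
    (⋃ x, D x) = V0 ∧
    Set.PairwiseDisjoint (Set.univ : Set (ZMod 3 ⊕ ZMod 3 ⊕ ZMod 3 × ZMod 3)) D ∧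
    (∀ x, G.IsClique (D x)) := by
  intro V0 Tset Rset Sset D
  obtain ⟨sinj, tinj, rinj, stne, srne, trne, striad, ttri, rtri, tranti, stadj, sradj⟩ := hrot
  -- the triads {s j, t j, r j}
  have triadI : ∀ j, IsTriad G (s j) (t j) (r j) := fun j =>
    ⟨stne j j, srne j j, trne j j, by simp [stadj], by simp [sradj], tranti j j⟩
  -- filling in adjacencies using antiprismaticity
  have fillS : ∀ (v : V) (j : ZMod 3), v ∈ V0 → ¬ G.Adj v (s j) →
      G.Adj v (t j) ∧ G.Adj v (r j) := by
    intro v j hv hn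
    rcases hap _ _ _ (triadI j) v (hv.1 j) (hv.2.1 j) (hv.2.2 j) with h | h | h <;> tauto
  have choiceTR : ∀ (v : V) (j : ZMod 3), v ∈ V0 → G.Adj v (s j) →
      (G.Adj v (t j) ∧ ¬ G.Adj v (r j)) ∨ (¬ G.Adj v (t j) ∧ G.Adj v (r j)) := by
    intro v j hv hj
    rcases hap _ _ _ (triadI j) v (hv.1 j) (hv.2.1 j) (hv.2.2 j) with h | h | h <;> tauto
  -- the adjacency profile of a vertex in one of the twelve sets
  have profile : ∀ x (v : V), v ∈ D x →
      (∀ j, G.Adj v (t j) ↔ (rotPt x j : Prop)) ∧ (∀ j, G.Adj v (r j) ↔ (rotPr x j : Prop)) := by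
    rintro (k | k | ⟨a, b⟩) v hx
    · simp only [D, Tset, Set.mem_setOf_eq] at hx
      obtain ⟨hv, h1, h2, h3, h4, h5⟩ := hx
      obtain ⟨h6, h7⟩ := fillS v k hv h1
      constructor <;> intro j <;> rcases zmod3_cases k j with rfl | rfl | rfl <;>
        simp [rotPt, rotPr, zmod3_a1, zmod3_a2, h2, h3, h4, h5, h6, h7,
          (by decide : (1 : ZMod 3) ≠ 0), (by decide : (2 : ZMod 3) ≠ 0)]
    · simp only [D, Rset, Set.mem_setOf_eq] at hx
      obtain ⟨hv, h1, h2, h3, h4, h5⟩ := hx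
      obtain ⟨h6, h7⟩ := fillS v k hv h1
      constructor <;> intro j <;> rcases zmod3_cases k j with rfl | rfl | rfl <;>
        simp [rotPt, rotPr, zmod3_a1, zmod3_a2, h2, h3, h4, h5, h6, h7,
          (by decide : (1 : ZMod 3) ≠ 0), (by decide : (2 : ZMod 3) ≠ 0)]
    · rcases eq_or_ne a b with rfl | hab
      · simp only [D, Sset, if_pos rfl] at hx
        exact absurd hx (Set.notMem_empty v)
      · simp only [D, Sset, if_neg hab, Set.mem_setOf_eq] at hx
        obtain ⟨hv, h1, h2, h3, h4, h5⟩ := hx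
        obtain ⟨h6, h7⟩ := fillS v (-(a + b)) hv h1
        have hca := zmod3_ca a b hab
        have hcb := zmod3_cb a b hab
        have hcase := fun j => zmod3_cases' a b j hab
        generalize -(a + b) = c at h1 h6 h7 hca hcb hcase
        constructor <;> intro j <;> rcases hcase j with rfl | rfl | rfl <;>
          simp [rotPt, rotPr, hab, hab.symm, hca, hcb, h2, h3, h4, h5, h6, h7]
  refine ⟨?_, ?_, ?_⟩
  · -- the union is V0
    ext v
    simp only [Set.mem_iUnion]
    constructor
    · rintro ⟨(k | k | ⟨a, b⟩), hx⟩
      · exact hx.1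
      · exact hx.1
      · rcases eq_or_ne a b with rfl | hab
        · simp only [D, Sset, if_pos rfl] at hx
          exact absurd hx (Set.notMem_empty v)
        · simp only [D, Sset, if_neg hab, Set.mem_setOf_eq] at hx
          exact hx.1
    · intro hv
      have triadSS : IsTriad G (s 0) (s 1) (s 2) :=
        ⟨sinj.ne (by decide), sinj.ne (by decide), sinj.ne (by decide),
          striad _ _ (by decide), striad _ _ (by decide), striad _ _ (by decide)⟩
      have key : ∀ k : ZMod 3, ¬ G.Adj v (s k) → G.Adj v (s (k + 1)) → G.Adj v (s (k + 2)) →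
          ∃ x, v ∈ D x := by
        intro k hk h1 h2
        rcases choiceTR v (k + 1) hv h1 with ⟨ht1, hr1⟩ | ⟨ht1, hr1⟩ <;>
          rcases choiceTR v (k + 2) hv h2 with ⟨ht2, hr2⟩ | ⟨ht2, hr2⟩
        · exact ⟨Sum.inr (Sum.inl k), hv, hk, ht1, ht2, hr1, hr2⟩
        · refine ⟨Sum.inr (Sum.inr (k + 1, k + 2)), ?_⟩
          show v ∈ Sset (k + 1) (k + 2)
          simp only [Sset, if_neg (zmod3_a12 k), Set.mem_setOf_eq]
          exact ⟨hv, by rw [zmod3_s1]; exact hk, ht1, hr2, ht2, hr1⟩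
        · refine ⟨Sum.inr (Sum.inr (k + 2, k + 1)), ?_⟩
          show v ∈ Sset (k + 2) (k + 1)
          simp only [Sset, if_neg (zmod3_a21 k), Set.mem_setOf_eq]
          exact ⟨hv, by rw [zmod3_s2]; exact hk, ht2, hr1, ht1, hr2⟩
        · exact ⟨Sum.inl k, hv, hk, hr1, hr2, ht1, ht2⟩
      rcases hap _ _ _ triadSS v (hv.1 0) (hv.1 1) (hv.1 2) with ⟨h0, h1, h2⟩ | ⟨h0, h1, h2⟩ |
        ⟨h0, h1, h2⟩
      · exact key 0 h0 h1 h2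
      · exact key 1 h1 h2 h0
      · exact key 2 h2 h0 h1
  · -- pairwise disjoint
    intro x _ y _ hxy
    rw [Function.onFun, Set.disjoint_left]
    intro v hvx hvy
    refine hxy (rotP_inj x y ?_ ?_)
    · intro j
      rw [Bool.eq_iff_iff]
      exact Iff.trans ((profile x v hvx).1 j).symm ((profile y v hvy).1 j)
    · intro j
      rw [Bool.eq_iff_iff]
      exact Iff.trans ((profile x v hvx).2 j).symm ((profile y v hvy).2 j)
  · -- cliques
    rintro (k | k | ⟨a, b⟩) u hu w hw huw
    · simp only [D, Tset, Set.mem_setOf_eq] at hu hw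
      by_contra hne
      have htriad : IsTriad G u w (s k) :=
        ⟨huw, hu.1.1 k, hw.1.1 k, hne, hu.2.1, hw.2.1⟩
      have h1 : ¬ G.Adj (t (k + 1)) u := fun h => hu.2.2.2.2.1 h.symm
      have h2 : ¬ G.Adj (t (k + 1)) w := fun h => hw.2.2.2.2.1 h.symm
      rcases hap u w (s k) htriad (t (k + 1)) (Ne.symm (hu.1.2.1 (k + 1)))
        (Ne.symm (hw.1.2.1 (k + 1))) (Ne.symm (stne k (k + 1))) with h | h | h <;> tauto
    · simp only [D, Rset, Set.mem_setOf_eq] at hu hw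
      by_contra hne
      have htriad : IsTriad G u w (s k) :=
        ⟨huw, hu.1.1 k, hw.1.1 k, hne, hu.2.1, hw.2.1⟩
      have h1 : ¬ G.Adj (r (k + 1)) u := fun h => hu.2.2.2.2.1 h.symm
      have h2 : ¬ G.Adj (r (k + 1)) w := fun h => hw.2.2.2.2.1 h.symm
      rcases hap u w (s k) htriad (r (k + 1)) (Ne.symm (hu.1.2.2 (k + 1)))
        (Ne.symm (hw.1.2.2 (k + 1))) (Ne.symm (srne k (k + 1))) with h | h | h <;> tauto
    · rcases eq_or_ne a b with rfl | hab
      · simp only [D, Sset, if_pos rfl] at hu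
        exact absurd hu (Set.notMem_empty u)
      · simp only [D, Sset, if_neg hab, Set.mem_setOf_eq] at hu hw
        by_contra hne
        have htriad : IsTriad G u w (s (-(a + b))) :=
          ⟨huw, hu.1.1 _, hw.1.1 _, hne, hu.2.1, hw.2.1⟩
        have h1 : ¬ G.Adj (t b) u := fun h => hu.2.2.2.2.1 h.symm
        have h2 : ¬ G.Adj (t b) w := fun h => hw.2.2.2.2.1 h.symm
        rcases hap u w (s (-(a + b))) htriad (t b) (Ne.symm (hu.1.2.1 b))
          (Ne.symm (hw.1.2.1 b)) (Ne.symm (stne _ b)) with h | h | h <;> tauto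
end

section
/- Let G be a graph containing three disjoint cliques C_1, C_2, C_3 partitioning V(G) with |C_1| ≤ |C_2| ≤ |C_3|. Then the collection consisting of the closed neighborhoods N[x] ∩ (C_j ∪ {x}) for x ∈ C_1 and j ∈ {2,3}, the closed neighborhoods N[x] ∩ (C_3 ∪ {x}) for x ∈ C_2, together with C_1, C_2, C_3 themselves, is an edge clique covering of G of size 2|C_1| + |C_2| + 3 = n + |C_1| − |C_3| + 3. Consequently, if |C_3| − |C_1| ≥ 2, then cc(G) ≤ n + 1. -/
open SimpleGraph

/-- The collection of cliques `N[x, C₂]`, `N[x, C₃]` for `x ∈ C₁`, `N[x, C₃]` for `x ∈ C₂`,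
together with `C₁, C₂, C₃`, where `N[x, Cⱼ] = N[x] ∩ (Cⱼ ∪ {x})`. -/
def tripleCover {V : Type*} (G : SimpleGraph V) (C₁ C₂ C₃ : Set V) : Set (Set V) :=
  ((fun x => insert x (G.neighborSet x) ∩ (C₂ ∪ {x})) '' C₁) ∪
  ((fun x => insert x (G.neighborSet x) ∩ (C₃ ∪ {x})) '' C₁) ∪
  ((fun x => insert x (G.neighborSet x) ∩ (C₃ ∪ {x})) '' C₂) ∪
  {C₁, C₂, C₃}

lemma nbhd_clique {V : Type*} (G : SimpleGraph V) {C : Set V} (hC : G.IsClique C) (x : V) :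
    G.IsClique (insert x (G.neighborSet x) ∩ (C ∪ {x})) := by
  intro u hu v hv huv
  obtain ⟨hu1, hu2⟩ := hu
  obtain ⟨hv1, hv2⟩ := hv
  rcases hu1 with rfl | hu1
  · rcases hv1 with rfl | hv1
    · exact absurd rfl huv
    · exact hv1
  · rcases hv1 with rfl | hv1
    · exact (G.adj_symm hu1)
    · have hux : u ≠ x := fun h => G.irrefl (h ▸ hu1)
      have hvx : v ≠ x := fun h => G.irrefl (h ▸ hv1)
      have huC : u ∈ C := hu2.resolve_right hux
      have hvC : v ∈ C := hv2.resolve_right hvx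
      exact hC huC hvC huv

/-- Let `G` contain three disjoint cliques `C₁, C₂, C₃` partitioning `V(G)`, with
`|C₁| ≤ |C₂| ≤ |C₃|`.  Then the collection `tripleCover G C₁ C₂ C₃` consists of cliques,
covers every edge of `G`, and has size (at most) `2|C₁| + |C₂| + 3 = n + |C₁| − |C₃| + 3`;
consequently `cc(G) ≤ 2|C₁| + |C₂| + 3`, and if `|C₃| − |C₁| ≥ 2` then `cc(G) ≤ n + 1`. -/
theorem stmt_19 {V : Type*} [Fintype V] (G : SimpleGraph V) (C₁ C₂ C₃ : Set V)
    (h1 : G.IsClique C₁) (h2 : G.IsClique C₂) (h3 : G.IsClique C₃)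
    (h12 : Disjoint C₁ C₂) (h13 : Disjoint C₁ C₃) (h23 : Disjoint C₂ C₃)
    (hcov : C₁ ∪ C₂ ∪ C₃ = Set.univ)
    (hle1 : C₁.ncard ≤ C₂.ncard) (hle2 : C₂.ncard ≤ C₃.ncard) :
    (∀ D ∈ tripleCover G C₁ C₂ C₃, G.IsClique D) ∧
    (∀ u v : V, G.Adj u v → ∃ D ∈ tripleCover G C₁ C₂ C₃, u ∈ D ∧ v ∈ D) ∧
    (tripleCover G C₁ C₂ C₃).ncard ≤ 2 * C₁.ncard + C₂.ncard + 3 ∧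
    ((2 * C₁.ncard + C₂.ncard + 3 : ℤ) =
      (Fintype.card V : ℤ) + C₁.ncard - C₃.ncard + 3) ∧
    edgeCliqueCoverNumber G ≤ 2 * C₁.ncard + C₂.ncard + 3 ∧
    (C₁.ncard + 2 ≤ C₃.ncard → edgeCliqueCoverNumber G ≤ Fintype.card V + 1) := by
  -- cliques
  have hclique : ∀ D ∈ tripleCover G C₁ C₂ C₃, G.IsClique D := by
    intro D hD
    rcases hD with ((⟨x, hx, rfl⟩ | ⟨x, hx, rfl⟩) | ⟨x, hx, rfl⟩) | hD
    · exact nbhd_clique G h2 x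
    · exact nbhd_clique G h3 x
    · exact nbhd_clique G h3 x
    · rcases hD with rfl | rfl | rfl
      · exact h1
      · exact h2
      · exact h3
  -- coverage
  have hmem : ∀ v : V, v ∈ C₁ ∨ v ∈ C₂ ∨ v ∈ C₃ := by
    intro v
    have : v ∈ C₁ ∪ C₂ ∪ C₃ := hcov ▸ Set.mem_univ v
    rcases this with (h | h) | h
    exacts [Or.inl h, Or.inr (Or.inl h), Or.inr (Or.inr h)]
  have hcover : ∀ u v : V, G.Adj u v → ∃ D ∈ tripleCover G C₁ C₂ C₃, u ∈ D ∧ v ∈ D := by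
    have key : ∀ (A B : Set V) (x u v : V), G.Adj u v →
        (x = u ∧ v ∈ B ∨ x = v ∧ u ∈ B) →
        u ∈ (fun x => insert x (G.neighborSet x) ∩ (B ∪ {x})) x ∧
        v ∈ (fun x => insert x (G.neighborSet x) ∩ (B ∪ {x})) x := by
      intro A B x u v hadj h
      rcases h with ⟨rfl, hv⟩ | ⟨rfl, hu⟩
      · exact ⟨⟨Or.inl rfl, Or.inr rfl⟩, ⟨Or.inr hadj, Or.inl hv⟩⟩
      · exact ⟨⟨Or.inr hadj.symm, Or.inl hu⟩, ⟨Or.inl rfl, Or.inr rfl⟩⟩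
    intro u v hadj
    have img1 : ∀ x ∈ C₁, (fun x => insert x (G.neighborSet x) ∩ (C₂ ∪ {x})) x ∈
        tripleCover G C₁ C₂ C₃ := fun x hx =>
      Or.inl (Or.inl (Or.inl ⟨x, hx, rfl⟩))
    have img2 : ∀ x ∈ C₁, (fun x => insert x (G.neighborSet x) ∩ (C₃ ∪ {x})) x ∈
        tripleCover G C₁ C₂ C₃ := fun x hx =>
      Or.inl (Or.inl (Or.inr ⟨x, hx, rfl⟩))
    have img3 : ∀ x ∈ C₂, (fun x => insert x (G.neighborSet x) ∩ (C₃ ∪ {x})) x ∈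
        tripleCover G C₁ C₂ C₃ := fun x hx =>
      Or.inl (Or.inr ⟨x, hx, rfl⟩)
    have base : ∀ D ∈ ({C₁, C₂, C₃} : Set (Set V)), D ∈ tripleCover G C₁ C₂ C₃ :=
      fun D hD => Or.inr hD
    rcases hmem u with hu | hu | hu <;> rcases hmem v with hv | hv | hv
    · exact ⟨C₁, base _ (Or.inl rfl), hu, hv⟩
    · exact ⟨_, img1 u hu, key C₁ C₂ u u v hadj (Or.inl ⟨rfl, hv⟩)⟩
    · exact ⟨_, img2 u hu, key C₁ C₃ u u v hadj (Or.inl ⟨rfl, hv⟩)⟩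
    · exact ⟨_, img1 v hv, key C₁ C₂ v u v hadj (Or.inr ⟨rfl, hu⟩)⟩
    · exact ⟨C₂, base _ (Or.inr (Or.inl rfl)), hu, hv⟩
    · exact ⟨_, img3 u hu, key C₂ C₃ u u v hadj (Or.inl ⟨rfl, hv⟩)⟩
    · exact ⟨_, img2 v hv, key C₁ C₃ v u v hadj (Or.inr ⟨rfl, hu⟩)⟩
    · exact ⟨_, img3 v hv, key C₂ C₃ v u v hadj (Or.inr ⟨rfl, hu⟩)⟩
    · exact ⟨C₃, base _ (Or.inr (Or.inr rfl)), hu, hv⟩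
  -- cardinality
  have hcard : (tripleCover G C₁ C₂ C₃).ncard ≤ 2 * C₁.ncard + C₂.ncard + 3 := by
    have e3 : ({C₁, C₂, C₃} : Set (Set V)).ncard ≤ 3 := by
      calc ({C₁, C₂, C₃} : Set (Set V)).ncard
          ≤ ({C₂, C₃} : Set (Set V)).ncard + 1 := Set.ncard_insert_le _ _
        _ ≤ (({C₃} : Set (Set V)).ncard + 1) + 1 := by
            exact Nat.add_le_add_right (Set.ncard_insert_le _ _) 1
        _ ≤ 3 := by rw [Set.ncard_singleton]
    calc (tripleCover G C₁ C₂ C₃).ncard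
        ≤ (((fun x => insert x (G.neighborSet x) ∩ (C₂ ∪ {x})) '' C₁) ∪
          ((fun x => insert x (G.neighborSet x) ∩ (C₃ ∪ {x})) '' C₁) ∪
          ((fun x => insert x (G.neighborSet x) ∩ (C₃ ∪ {x})) '' C₂)).ncard +
          ({C₁, C₂, C₃} : Set (Set V)).ncard := Set.ncard_union_le _ _
      _ ≤ ((((fun x => insert x (G.neighborSet x) ∩ (C₂ ∪ {x})) '' C₁) ∪
          ((fun x => insert x (G.neighborSet x) ∩ (C₃ ∪ {x})) '' C₁)).ncard +
          ((fun x => insert x (G.neighborSet x) ∩ (C₃ ∪ {x})) '' C₂).ncard) +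
          ({C₁, C₂, C₃} : Set (Set V)).ncard :=
            Nat.add_le_add_right (Set.ncard_union_le _ _) _
      _ ≤ ((((fun x => insert x (G.neighborSet x) ∩ (C₂ ∪ {x})) '' C₁).ncard +
          ((fun x => insert x (G.neighborSet x) ∩ (C₃ ∪ {x})) '' C₁).ncard) +
          ((fun x => insert x (G.neighborSet x) ∩ (C₃ ∪ {x})) '' C₂).ncard) +
          ({C₁, C₂, C₃} : Set (Set V)).ncard := by
            exact Nat.add_le_add_right (Nat.add_le_add_right (Set.ncard_union_le _ _) _) _
      _ ≤ ((C₁.ncard + C₁.ncard) + C₂.ncard) + 3 := by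
            gcongr <;> first | exact Set.ncard_image_le (Set.toFinite _) | exact e3
      _ = 2 * C₁.ncard + C₂.ncard + 3 := by ring
  -- card identity
  have hsum : Fintype.card V = C₁.ncard + C₂.ncard + C₃.ncard := by
    have h123 : Disjoint (C₁ ∪ C₂) C₃ := Set.disjoint_union_left.mpr ⟨h13, h23⟩
    have : (Set.univ : Set V).ncard = C₁.ncard + C₂.ncard + C₃.ncard := by
      rw [← hcov, Set.ncard_union_eq h123 (Set.toFinite _) (Set.toFinite _),
        Set.ncard_union_eq h12 (Set.toFinite _) (Set.toFinite _)]
    rw [← this, Set.ncard_univ, Nat.card_eq_fintype_card]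
  have hid : (2 * C₁.ncard + C₂.ncard + 3 : ℤ) =
      (Fintype.card V : ℤ) + C₁.ncard - C₃.ncard + 3 := by
    have := hsum
    push_cast
    omega
  -- ecc bound
  have hfin : (tripleCover G C₁ C₂ C₃).Finite := Set.toFinite _
  have hcc : edgeCliqueCoverNumber G ≤ 2 * C₁.ncard + C₂.ncard + 3 := by
    have hmem' : hfin.toFinset.card ∈
        {k | ∃ 𝒞 : Finset (Set V), IsEdgeCliqueCover G 𝒞 ∧ 𝒞.card = k} := by
      refine ⟨hfin.toFinset, ⟨?_, ?_⟩, rfl⟩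
      · intro C hC; exact hclique C (hfin.mem_toFinset.mp hC)
      · intro u v huv
        obtain ⟨D, hD, h⟩ := hcover u v huv
        exact ⟨D, hfin.mem_toFinset.mpr hD, h⟩
    have h1' := Nat.sInf_le hmem'
    have h2' : hfin.toFinset.card = (tripleCover G C₁ C₂ C₃).ncard :=
      (Set.ncard_eq_toFinset_card _ hfin).symm
    calc edgeCliqueCoverNumber G ≤ hfin.toFinset.card := h1'
      _ = (tripleCover G C₁ C₂ C₃).ncard := h2'
      _ ≤ 2 * C₁.ncard + C₂.ncard + 3 := hcard
  refine ⟨hclique, hcover, hcard, hid, hcc, ?_⟩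
  intro hge
  have := hsum
  omega
end
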